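/- For any natural number m and formal power series φ(x) = e^{⊙x} M_φ with zero constant term, M_{φ^{∘m}} = (e^{⊙M_φ})^m E_1, where E_1 is the block matrix which is the identity in the (1,1) block and zero elsewhere, and the power on the right is with respect to ordinary matrix multiplication. -/

import Mathlib

/-! Multi-index matrices and their symmetric product (Bekbaev). -/

/-- Multi-indices: `n`-tuples of nonnegative integers. -/
abbrev MultiIndex (n : ℕ) := Fin n →₀ ℕ

namespace SymProd

variable {n : ℕ} {R : Type*} [CommRing R]

/-- `|α| = α₁ + ⋯ + αₙ`. -/
def deg (α : MultiIndex n) : ℕ := α.sum fun _ v => v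

/-- `α! = α₁! ⋯ αₙ!`. -/
def mfact (α : MultiIndex n) : ℕ := α.prod fun _ v => v.factorial

/-- The multinomial coefficient `C(α,β) = α!/(β!(α−β)!) = ∏ᵢ C(αᵢ,βᵢ)`. -/
def mchoose (α β : MultiIndex n) : ℕ := ∏ i ∈ α.support ∪ β.support, (α i).choose (β i)

/-- A "matrix" indexed by pairs of multi-indices (row index first). A matrix in
`M(p',p;R)` is such a function supported on rows of degree `p'` and columns of degree `p`. -/
abbrev Mat (n : ℕ) (R : Type*) := MultiIndex n → MultiIndex n → R

/-- `A` belongs to `M(p',p;R)`: supported on rows `α'` with `|α'| = p'` and columns `α`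
with `|α| = p`. -/
def IsHom (p' p : ℕ) (A : Mat n R) : Prop :=
  ∀ α' α, A α' α ≠ 0 → deg α' = p' ∧ deg α = p

/-- The symmetric product
`(A ⊙ B)^{α'}_α = ∑_{β' ≪ α', β ≪ α} C(α,β) A^{β'}_β B^{α'−β'}_{α−β}`.
For `A ∈ M(p',p;R)` and `B ∈ M(q',q;R)` this agrees with Bekbaev's Definition 1
(the degree restrictions on `β, β'` hold automatically on the support of `A`). -/
noncomputable def odot (A B : Mat n R) : Mat n R := fun α' α =>
  ∑ β' ∈ Finset.Iic α', ∑ β ∈ Finset.Iic α,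
    (mchoose α β : R) * A β' β * B (α' - β') (α - β)

/-- The identity element `1 ∈ Mat(R)`: the `(0,0)` block is `1`. -/
def matOne : Mat n R := fun α' α => if α' = 0 ∧ α = 0 then 1 else 0

/-- `A^{⊙m}`, the `m`-th symmetric power. -/
noncomputable def sympow (A : Mat n R) : ℕ → Mat n R
  | 0 => matOne
  | m + 1 => odot (sympow A m) A

/-- The row vector `h = (h₁,…,hₙ) ∈ M(0,1;R)` attached to `h : Fin n → R`. -/
noncomputable def rowVec (h : Fin n → R) : Mat n R := fun α' α =>
  if α' = 0 then ∑ j : Fin n, (if α = Finsupp.single j 1 then h j else 0) else 0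

/-- Multi-indices of degree `w` (a finite set). -/
noncomputable def degSet (n w : ℕ) : Finset (MultiIndex n) :=
  (Finset.Iic (Finsupp.equivFunOnFinite.symm fun _ : Fin n => w)).filter fun β => deg β = w

/-- Ordinary matrix product of `v ∈ M(0,w;R)` with `A ∈ M(p',w;R)`, contracting the
weight-`w` index (the columns of `A`, via transposition): the result, in `M(0,p';R)`,
has entries `(v·A)^{α'}_α = ∑_{|β| = w} v^{α'}_β A^{α}_β`. -/
noncomputable def vecMul (w : ℕ) (v A : Mat n R) : Mat n R := fun α' α =>
  ∑ β ∈ degSet n w, v α' β * A α β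

end SymProd

namespace SymProd

variable {n : ℕ} {F : Type*} [Field F]

/-- The constant multi-index `(d,…,d)`. -/
noncomputable def constM (n d : ℕ) : MultiIndex n := Finsupp.equivFunOnFinite.symm fun _ => d

/-- Composition: substitution of the `n`-tuple `φ` (each with zero constant term) into the
multivariate power series `f`, i.e. `f(φ(x))`; the coefficient of `x^α` only receives
contributions from monomials `x^β` of `f` with `|β| ≤ |α|`. -/
noncomputable def mvComp (φ : Fin n → MvPowerSeries (Fin n) F)
    (f : MvPowerSeries (Fin n) F) : MvPowerSeries (Fin n) F := fun α =>
  ∑ β ∈ Finset.Iic (constM n (deg α)),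
    MvPowerSeries.coeff β f * MvPowerSeries.coeff α (∏ j : Fin n, φ j ^ β j)

/-- `m`-fold compositional iterate `φ^{∘m}` of a power series map, `φ^{∘0} = id`. -/
noncomputable def mvIter (φ : Fin n → MvPowerSeries (Fin n) F) :
    ℕ → Fin n → MvPowerSeries (Fin n) F
  | 0 => fun j => MvPowerSeries.X j
  | m + 1 => fun j => mvComp φ (mvIter φ m j)

/-- The matrix `M_φ ∈ Mat(F)` of a power series map `φ : Fⁿ → Fⁿ`: supported on the
column blocks `p = 1`, with `(M_φ)^{α'}_{e_j} = ` the coefficient of `x^{α'}` in `φ_j`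
(from the expansion `φ(x) = ∑_i (x^{⊙i}/i!) M^i_1`). -/
noncomputable def matOf (φ : Fin n → MvPowerSeries (Fin n) F) : Mat n F := fun α' α =>
  ∑ j : Fin n, if α = Finsupp.single j 1 then MvPowerSeries.coeff α' (φ j) else 0

/-- Ordinary (block) matrix product on `Mat(F)`; the contraction is truncated to
column-degrees `≤ deg α'`, which is the full product whenever the left factor `A`
satisfies `A α' β = 0` for `deg β > deg α'` (as is the case for `e^{⊙M_φ}` with
`φ(0) = 0`). -/
noncomputable def matMul (A B : Mat n F) : Mat n F := fun α' α =>
  ∑ β ∈ Finset.Iic (constM n (deg α')), A α' β * B β α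

/-- `E_1`: identity in the `(1,1)` block, zero elsewhere. -/
def E1 : Mat n F := fun α' α => if α' = α ∧ deg α = 1 then 1 else 0

/-- `E_∞`: the (infinite) identity matrix of `Mat(F)`. -/
def Einf : Mat n F := fun α' α => if α' = α then 1 else 0

/-- Powers with respect to ordinary matrix multiplication. -/
noncomputable def matPow (A : Mat n F) : ℕ → Mat n F
  | 0 => Einf
  | m + 1 => matMul A (matPow A m)

/-- `e^{⊙A} = ∑_i A^{⊙i}/i!`; the sum is truncated blockwise at `i = deg α'`, which is
the full sum whenever `A^{⊙i}` has vanishing `(deg α', ·)` blocks for `i > deg α'`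
(as is the case for `A = M_φ` with `M_φ(0,1) = 0`). -/
noncomputable def expOdot (A : Mat n F) : Mat n F := fun α' α =>
  ∑ i ∈ Finset.range (deg α' + 1), (i.factorial : F)⁻¹ * sympow A i α' α

end SymProd


/-!
Reading column `α` of a matrix as a power series, column `α` of `M_φ^{⊙i}` is
`i! φ^α = i! ∏ φⱼ^{αⱼ}` when `|α| = i` and zero otherwise: multiplying by `M_φ` with `⊙`
adds one factor `φⱼ`, and the multinomial coefficient `C(α, α - eⱼ) = αⱼ` summed over `j`
gives `|α|`. Hence column `α` of `e^{⊙M_φ}` is `φ^α`, so extracting coefficients of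
`f(φ(x)) = ∑_β f_β φ^β` is the product `e^{⊙M_φ} M_f`, and the theorem follows by
induction on `m`. As `φ(0) = 0`, `φ^α` has order at least `|α|`; thus all matrices involved
are block lower triangular, which makes the truncations in the definitions harmless and the
matrix product associative.
-/

namespace SymProd

open MvPowerSeries Finset

section MultiIndex

variable {n : ℕ}

lemma deg_eq_degree (α : MultiIndex n) : deg α = α.degree := rfl

lemma deg_sub_add {β α : MultiIndex n} (h : β ≤ α) : deg (α - β) + deg β = deg α := by
  simp only [deg_eq_degree, ← map_add, tsub_add_cancel_of_le h]

lemma le_constM_of_deg_le {α : MultiIndex n} {k : ℕ} (h : deg α ≤ k) : α ≤ constM n k :=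
  fun j => (Finsupp.le_degree j α).trans h

lemma le_constM_deg (α : MultiIndex n) : α ≤ constM n (deg α) :=
  le_constM_of_deg_le le_rfl

lemma constM_mono : Monotone (constM n) := fun _ _ h _ => h

lemma mchoose_eq_prod (α β : MultiIndex n) : mchoose α β = ∏ i, (α i).choose (β i) :=
  prod_subset (subset_univ _) fun i _ hi => by
    simp only [mem_union, Finsupp.mem_support_iff, not_or, not_not] at hi
    simp [hi.1, hi.2]

lemma mchoose_sub_single {α : MultiIndex n} {j : Fin n} (hj : α j ≠ 0) :
    mchoose α (α - Finsupp.single j 1) = α j := by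
  rw [mchoose_eq_prod, prod_eq_single j]
  · simpa using Nat.choose_symm (n := α j) (k := 1) (by omega)
  · intro i _ hij
    simp [Ne.symm hij]
  · simp

end MultiIndex

section PowerSeries

variable {n : ℕ} {R : Type*} [CommSemiring R]

lemma coeff_mul_eq_sum_Iic (f g : MvPowerSeries (Fin n) R) (α : MultiIndex n) :
    coeff α (f * g) = ∑ β ∈ Iic α, coeff β f * coeff (α - β) g := by
  rw [coeff_mul]
  refine sum_nbij' Prod.fst (fun β => (β, α - β)) ?_ ?_ ?_ ?_ ?_ <;>
    simp only [HasAntidiagonal.mem_antidiagonal, mem_Iic, Prod.forall]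
  · rintro a b rfl; exact le_self_add
  · exact fun β hβ => add_tsub_cancel_of_le hβ
  · rintro a b rfl; simp
  · simp
  · rintro a b rfl; simp

lemma coeff_prod_pow_eq_zero_of_deg_lt {φ : Fin n → MvPowerSeries (Fin n) R}
    (hφ : ∀ j, constantCoeff (φ j) = 0) {α' α : MultiIndex n} (h : deg α' < deg α) :
    coeff α' (∏ j, φ j ^ α j) = 0 := by
  apply coeff_of_lt_order
  calc (α'.degree : ℕ∞) < α.degree := by exact_mod_cast h
    _ = ∑ j, (α j : ℕ∞) := by rw [Finsupp.degree_eq_sum]; push_cast; rfl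
    _ ≤ ∑ j, (φ j ^ α j).order :=
      sum_le_sum fun j _ => le_order_pow_of_constantCoeff_eq_zero _ (hφ j)
    _ ≤ _ := le_order_prod _ _

lemma sum_Iic_mchoose_ite_sub_eq_single (α : MultiIndex n) (j : Fin n) (g : MultiIndex n → R) :
    ∑ β ∈ Iic α, (if α - β = Finsupp.single j 1 then (mchoose α β : R) * g β else 0) =
      α j * g (α - Finsupp.single j 1) := by
  rcases eq_or_ne (α j) 0 with hj | hj
  · rw [hj, Nat.cast_zero, zero_mul]
    refine sum_eq_zero fun β _ => if_neg fun h => ?_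
    simpa [hj] using DFunLike.congr_fun h j
  · have hle : Finsupp.single j 1 ≤ α :=
      Finsupp.single_le_iff.mpr (Nat.one_le_iff_ne_zero.mpr hj)
    rw [sum_eq_single (α - Finsupp.single j 1), if_pos (tsub_tsub_cancel_of_le hle),
      mchoose_sub_single hj]
    · intro β hβ hne
      refine if_neg fun h => hne ?_
      rw [← h, tsub_tsub_cancel_of_le (mem_Iic.mp hβ)]
    · exact fun h => absurd (mem_Iic.mpr tsub_le_self) h

end PowerSeries

section SymmetricPowers

variable {n : ℕ} {F : Type*} [Field F]

def col (A : Mat n F) (α : MultiIndex n) : MvPowerSeries (Fin n) F := fun β' => A β' α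

lemma coeff_col (A : Mat n F) (α' α : MultiIndex n) : coeff α' (col A α) = A α' α := rfl

lemma odot_matOf_apply (A : Mat n F) (φ : Fin n → MvPowerSeries (Fin n) F)
    (α' α : MultiIndex n) :
    odot A (matOf φ) α' α =
      ∑ j, (α j : F) * coeff α' (col A (α - Finsupp.single j 1) * φ j) := by
  simp only [coeff_mul_eq_sum_Iic, coeff_col, mul_sum]
  rw [sum_comm]
  refine sum_congr rfl fun β' _ => ?_
  simp only [matOf, mul_sum, mul_ite, mul_zero]
  rw [sum_comm]
  refine sum_congr rfl fun j _ => ?_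
  simp only [mul_assoc]
  exact sum_Iic_mchoose_ite_sub_eq_single α j fun β => A β' β * coeff (α' - β') (φ j)

lemma prod_pow_sub_single_mul (φ : Fin n → MvPowerSeries (Fin n) F) {α : MultiIndex n}
    {j : Fin n} (hj : α j ≠ 0) :
    (∏ k, φ k ^ (α - Finsupp.single j 1 : MultiIndex n) k) * φ j = ∏ k, φ k ^ α k := by
  have hle : Finsupp.single j 1 ≤ α :=
    Finsupp.single_le_iff.mpr (Nat.one_le_iff_ne_zero.mpr hj)
  conv_rhs => rw [← tsub_add_cancel_of_le hle]
  simp only [Finsupp.add_apply, pow_add, prod_mul_distrib, Finsupp.single_apply, pow_ite,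
    pow_one, pow_zero, prod_ite_eq, mem_univ, if_true]

lemma col_sympow_matOf (φ : Fin n → MvPowerSeries (Fin n) F) (i : ℕ) (α : MultiIndex n) :
    col (sympow (matOf φ) i) α =
      if deg α = i then (i.factorial : F) • ∏ j, φ j ^ α j else 0 := by
  induction i generalizing α with
  | zero =>
    ext α'
    by_cases hα : α = 0
    · subst hα
      simp [coeff_col, sympow, matOne, coeff_one, deg_eq_degree]
    · simp [coeff_col, sympow, matOne, hα, deg_eq_degree, Finsupp.degree_eq_zero_iff]
  | succ i ih =>
    ext α'
    have hterm : ∀ j,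
        (α j : F) * coeff α' (col (sympow (matOf φ) i) (α - Finsupp.single j 1) * φ j) =
          (α j : F) *
            coeff α' (if deg α = i + 1 then (i.factorial : F) • ∏ k, φ k ^ α k else 0) := by
      intro j
      rcases eq_or_ne (α j) 0 with hj | hj
      · simp [hj]
      have hle : Finsupp.single j 1 ≤ α :=
        Finsupp.single_le_iff.mpr (Nat.one_le_iff_ne_zero.mpr hj)
      have hdeg : deg (α - Finsupp.single j 1) = i ↔ deg α = i + 1 := by
        have := deg_sub_add hle
        rw [deg_eq_degree (Finsupp.single j 1), Finsupp.degree_single] at this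
        omega
      simp only [ih, hdeg]
      split_ifs
      · rw [smul_mul_assoc, prod_pow_sub_single_mul φ hj]
      · simp
    rw [coeff_col, sympow, odot_matOf_apply, sum_congr rfl fun j _ => hterm j, ← sum_mul,
      ← Nat.cast_sum, ← Finsupp.degree_eq_sum, ← deg_eq_degree]
    split_ifs with h <;> simp [h, Nat.factorial_succ, mul_assoc]

lemma expOdot_matOf_apply [CharZero F] {φ : Fin n → MvPowerSeries (Fin n) F}
    (hφ : ∀ j, constantCoeff (φ j) = 0) (α' α : MultiIndex n) :
    expOdot (matOf φ) α' α = coeff α' (∏ j, φ j ^ α j) := by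
  simp only [expOdot, ← coeff_col (sympow _ _), col_sympow_matOf, apply_ite (coeff α'),
    coeff_smul, map_zero, mul_ite, mul_zero, eq_comm (a := deg α), sum_ite_eq', mem_range]
  split_ifs with h
  · rw [← mul_assoc, inv_mul_cancel₀ (Nat.cast_ne_zero.mpr (Nat.factorial_ne_zero _)), one_mul]
  · exact (coeff_prod_pow_eq_zero_of_deg_lt hφ (by omega)).symm

end SymmetricPowers

section BlockMatrices

variable {n : ℕ} {F : Type*} [Field F]

lemma coeff_mvComp (φ : Fin n → MvPowerSeries (Fin n) F) (f : MvPowerSeries (Fin n) F)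
    (α : MultiIndex n) :
    coeff α (mvComp φ f) =
      ∑ β ∈ Iic (constM n (deg α)), coeff β f * coeff α (∏ j, φ j ^ β j) :=
  rfl

lemma matOf_mvComp [CharZero F] {φ : Fin n → MvPowerSeries (Fin n) F}
    (hφ : ∀ j, constantCoeff (φ j) = 0) (ψ : Fin n → MvPowerSeries (Fin n) F) :
    matOf (fun j => mvComp φ (ψ j)) = matMul (expOdot (matOf φ)) (matOf ψ) := by
  ext α' α
  simp only [matOf, matMul, expOdot_matOf_apply hφ, coeff_mvComp, mul_sum]
  rw [sum_comm]
  refine sum_congr rfl fun j _ => ?_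
  split_ifs <;> simp [mul_comm]

def IsBlockLowerTriangular (A : Mat n F) : Prop := ∀ α' α, deg α' < deg α → A α' α = 0

lemma isBlockLowerTriangular_Einf : IsBlockLowerTriangular (Einf : Mat n F) :=
  fun _ _ h => if_neg (by rintro rfl; exact h.false)

lemma IsBlockLowerTriangular.matMul {A B : Mat n F} (hA : IsBlockLowerTriangular A)
    (hB : IsBlockLowerTriangular B) : IsBlockLowerTriangular (matMul A B) := by
  intro α' α h
  refine sum_eq_zero fun β _ => ?_
  rcases lt_or_ge (deg α') (deg β) with hβ | hβ
  · rw [hA _ _ hβ, zero_mul]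
  · rw [hB _ _ (hβ.trans_lt h), mul_zero]

lemma IsBlockLowerTriangular.matPow {A : Mat n F} (hA : IsBlockLowerTriangular A) (m : ℕ) :
    IsBlockLowerTriangular (matPow A m) := by
  induction m with
  | zero => exact isBlockLowerTriangular_Einf
  | succ m ih => exact hA.matMul ih

lemma isBlockLowerTriangular_expOdot_matOf [CharZero F]
    {φ : Fin n → MvPowerSeries (Fin n) F}
    (hφ : ∀ j, constantCoeff (φ j) = 0) : IsBlockLowerTriangular (expOdot (matOf φ)) :=
  fun _ _ h => (expOdot_matOf_apply hφ _ _).trans (coeff_prod_pow_eq_zero_of_deg_lt hφ h)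

lemma matMul_assoc {A B : Mat n F} (hA : IsBlockLowerTriangular A)
    (hB : IsBlockLowerTriangular B) (C : Mat n F) :
    matMul (matMul A B) C = matMul A (matMul B C) := by
  ext α' α
  simp only [matMul, sum_mul, mul_sum]
  rw [sum_comm]
  refine sum_congr rfl fun β _ => ?_
  rcases lt_or_ge (deg α') (deg β) with hβ | hβ
  · simp [hA _ _ hβ]
  -- `B β γ = 0` once `deg γ > deg β`, so truncating the inner sum at `deg β` loses nothing
  rw [← sum_subset (Iic_subset_Iic.mpr (constM_mono hβ))]
  · exact sum_congr rfl fun γ _ => mul_assoc _ _ _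
  · intro γ _ hγ
    rw [hB _ _ (lt_of_not_ge fun h => hγ (mem_Iic.mpr (le_constM_of_deg_le h))), mul_zero,
      zero_mul]

lemma Einf_matMul (B : Mat n F) : matMul Einf B = B := by
  ext α' α
  simp [matMul, Einf, le_constM_deg]

lemma matOf_X : matOf (fun j => (X j : MvPowerSeries (Fin n) F)) = E1 := by
  ext α' α
  by_cases hα : deg α = 1
  · obtain ⟨k, rfl⟩ := (Finsupp.sum_eq_one_iff α).mp hα
    simp [matOf, E1, coeff_X, hα, Finsupp.single_left_inj]
  · have : ∀ j, α ≠ Finsupp.single j 1 := by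
      rintro j rfl
      exact hα (Finsupp.degree_single j 1)
    simp [matOf, E1, hα, this]

end BlockMatrices

end SymProd

open SymProd MvPowerSeries in
/-- for any natural `m` and a power series map `φ` with zero constant
term, `M_{φ^{∘m}} = (e^{⊙M_φ})^m E_1`. -/
theorem matOf_iter {n : ℕ} (F : Type*) [Field F] [CharZero F]
    (φ : Fin n → MvPowerSeries (Fin n) F)
    (hφ : ∀ j, constantCoeff (φ j) = 0) (m : ℕ) :
    matOf (mvIter φ m) = matMul (matPow (expOdot (matOf φ)) m) E1 := by
  induction m with
  | zero => exact matOf_X.trans (Einf_matMul E1).symm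
  | succ m ih =>
    have hexp := isBlockLowerTriangular_expOdot_matOf hφ
    calc matOf (mvIter φ (m + 1)) = matMul (expOdot (matOf φ)) (matOf (mvIter φ m)) :=
          matOf_mvComp hφ _
      _ = matMul (matPow (expOdot (matOf φ)) (m + 1)) E1 := by
          rw [ih, matPow, matMul_assoc hexp (hexp.matPow m)]
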